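/- For N ≥ 1 and z = x + iy ∈ ℍ, the matrix λ(z) = (1/(√N·y))·(-(z+z̄)/2, zz̄; -1, (z+z̄)/2) satisfies Q(λ(z)) = 1 (with Q(λ) = N·det λ restricted to trace-zero real matrices) and the equivariance g.λ(z) = λ(gz) for all g ∈ SL₂(ℝ), where g acts on 2×2 matrices by conjugation and on ℍ by fractional linear transformations. -/
import Mathlib


open UpperHalfPlane
open scoped MatrixGroups

/-- The matrix `λ(z) = (1/(√N·y)) (-(z+z̄)/2, zz̄; -1, (z+z̄)/2)` attached to `z = x+iy ∈ ℍ`. -/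
noncomputable def lamMat (N : ℕ) (z : UpperHalfPlane) : Matrix (Fin 2) (Fin 2) ℝ :=
  (1 / (Real.sqrt N * z.im)) • !![-z.re, z.re ^ 2 + z.im ^ 2; -1, z.re]

/-- `λ(z)` satisfies `Q(λ(z)) = N·det(λ(z)) = 1` and is `SL₂(ℝ)`-equivariant:
`g.λ(z) = g λ(z) g⁻¹ = λ(gz)`. -/
theorem lamMat_norm_one_and_equivariant (N : ℕ) (hN : 0 < N) (z : UpperHalfPlane) :
    (N : ℝ) * (lamMat N z).det = 1 ∧
    ∀ g : Matrix.SpecialLinearGroup (Fin 2) ℝ,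
      (g : Matrix (Fin 2) (Fin 2) ℝ) * lamMat N z *
          ((g⁻¹ : Matrix.SpecialLinearGroup (Fin 2) ℝ) : Matrix (Fin 2) (Fin 2) ℝ)
        = lamMat N (g • z) := by
  have hNR : (0 : ℝ) < N := by exact_mod_cast hN
  have hsN : Real.sqrt N ≠ 0 := ne_of_gt (Real.sqrt_pos.mpr hNR)
  have hy : z.im ≠ 0 := ne_of_gt z.im_pos
  constructor
  · simp only [lamMat, Matrix.det_smul, Matrix.det_fin_two_of, Fintype.card_fin]
    field_simp
    ring_nf
    rw [Real.sq_sqrt hNR.le]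
    ring
  · intro g
    set a := g.1 0 0 with ha
    set b := g.1 0 1 with hb
    set c := g.1 1 0 with hc
    set d := g.1 1 1 with hd
    have hdet : a * d - b * c = 1 := by
      have := g.2
      rwa [Matrix.det_fin_two] at this
    set w := g • z with hw
    have hv : (c : ℂ) * z + d ≠ 0 := by
      intro h
      have him : c * z.im = 0 := by
        have := congrArg Complex.im h
        simpa [UpperHalfPlane.coe_im] using this
      have hc0 : c = 0 := by
        rcases mul_eq_zero.mp him with h' | h'
        · exact h'
        · exact absurd h' hy
      have hd0 : d = 0 := by
        have := congrArg Complex.re h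
        simpa [hc0, UpperHalfPlane.coe_re] using this
      rw [hc0, hd0] at hdet
      simp at hdet
    have hcoe : (w : ℂ) = ((a : ℂ) * z + b) / ((c : ℂ) * z + d) := by
      rw [hw, UpperHalfPlane.specialLinearGroup_apply]
      simp [← ha, ← hb, ← hc, ← hd]
    have hmul : (w : ℂ) * ((c : ℂ) * z + d) = (a : ℂ) * z + b := by
      rw [hcoe, div_mul_cancel₀ _ hv]
    have e1 := congrArg Complex.re hmul
    have e2 := congrArg Complex.im hmul
    simp only [Complex.mul_re, Complex.mul_im, Complex.add_re, Complex.add_im,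
      Complex.ofReal_re, Complex.ofReal_im, UpperHalfPlane.coe_re, UpperHalfPlane.coe_im,
      zero_mul, mul_zero, add_zero, zero_add, sub_zero] at e1 e2
    have himD : w.im * ((c * z.re + d) ^ 2 + (c * z.im) ^ 2) = z.im := by
      linear_combination (-(c * z.im)) * e1 + (c * z.re + d) * e2 + z.im * hdet
    have hD0 : (c * z.re + d) ^ 2 + (c * z.im) ^ 2 ≠ 0 := by
      intro h
      rw [h, mul_zero] at himD
      exact hy himD.symm
    have hreD : w.re * ((c * z.re + d) ^ 2 + (c * z.im) ^ 2)
        = (a * z.re + b) * (c * z.re + d) + a * c * z.im ^ 2 := by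
      linear_combination (c * z.re + d) * e1 + (c * z.im) * e2
    have hwim : w.im ≠ 0 := ne_of_gt w.im_pos
    have step : ∀ P Q : ℝ, w.im * P = z.im * Q →
        1 / (Real.sqrt N * z.im) * P = 1 / (Real.sqrt N * w.im) * Q := by
      intro P Q h
      rw [div_mul_eq_mul_div, div_mul_eq_mul_div,
        div_eq_div_iff (mul_ne_zero hsN hy) (mul_ne_zero hsN hwim)]
      linear_combination Real.sqrt N * h
    have hginv : ((g⁻¹ : Matrix.SpecialLinearGroup (Fin 2) ℝ) : Matrix (Fin 2) (Fin 2) ℝ)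
        = !![d, -b; -c, a] := by
      rw [Matrix.SpecialLinearGroup.coe_inv, Matrix.adjugate_fin_two]
    have hg : (g : Matrix (Fin 2) (Fin 2) ℝ) = !![a, b; c, d] := by
      ext i j; fin_cases i <;> fin_cases j <;> simp [ha, hb, hc, hd]
    rw [lamMat, lamMat, hg, hginv, Matrix.mul_smul, Matrix.smul_mul,
      Matrix.mul_fin_two, Matrix.mul_fin_two]
    ext i j
    fin_cases i <;> fin_cases j <;>
      simp only [Matrix.smul_apply, Matrix.cons_val_zero, Matrix.cons_val_one,
        Matrix.head_cons, Matrix.head_fin_const, Matrix.cons_val', Matrix.empty_val',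
        Matrix.cons_val_fin_one, smul_eq_mul, Fin.mk_zero, Fin.mk_one, Matrix.of_apply]
    · refine step _ _ ?_
      apply mul_right_cancel₀ hD0
      linear_combination (-((a * z.re + b) * (c * z.re + d) + a * c * z.im ^ 2)) * himD
        + z.im * hreD
    · refine step _ _ ?_
      apply mul_right_cancel₀ (mul_ne_zero hD0 hD0)
      linear_combination
        (((a * z.re + b) ^ 2 + a ^ 2 * z.im ^ 2) * ((c * z.re + d) ^ 2 + (c * z.im) ^ 2)
          - z.im * (w.im * ((c * z.re + d) ^ 2 + (c * z.im) ^ 2) + z.im)) * himD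
        + (-(z.im * (w.re * ((c * z.re + d) ^ 2 + (c * z.im) ^ 2)
            + ((a * z.re + b) * (c * z.re + d) + a * c * z.im ^ 2)))) * hreD
        + (z.im ^ 3 * (a * d - b * c + 1)) * hdet
    · refine step _ _ ?_
      apply mul_right_cancel₀ hD0
      linear_combination (-((c * z.re + d) ^ 2 + (c * z.im) ^ 2)) * himD
    · refine step _ _ ?_
      apply mul_right_cancel₀ hD0
      linear_combination ((a * z.re + b) * (c * z.re + d) + a * c * z.im ^ 2) * himD
        + (-z.im) * hreD
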